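/- arXiv:1903.06736 — 2 statements merged into one kernel-verified Lean document; each statement's English description precedes it below -/
import Mathlib

section
/- Let (K,v) be a valued field, let μ be a valuation on K[x] extending v and μ* a semivaluation on K[x] extending v, both with values in a common linearly ordered abelian group Λ (plus ∞). Suppose μ ≤ μ* and μ ≠ μ*, and let φ ∈ K[x] be a monic polynomial of minimal degree among monic polynomials satisfying μ(φ) < μ*(φ). Then: (a) φ is a key polynomial for μ; (b) the augmented valuation μ' defined on canonical φ-expansions by μ'(Σ_{s≥0} a_s φ^s) = min_s (μ(a_s) + s·μ*(φ)) satisfies μ < μ' ≤ μ*; (c) for every f ∈ K[x], μ(f) = μ*(f) if and only if φ ∤_μ f. -/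
open Polynomial

section Core

variable {K : Type*} [Field K] {Λ : Type*} [AddCommGroup Λ] [LinearOrder Λ] [IsOrderedAddMonoid Λ]

/-- A (Krull) valuation on a field `K`, written additively, with values in `Λ ∪ {∞}`. -/
def IsVal (v : K → WithTop Λ) : Prop :=
  (∀ a b : K, v (a * b) = v a + v b) ∧
  (∀ a b : K, min (v a) (v b) ≤ v (a + b)) ∧
  (∀ a : K, v a = ⊤ ↔ a = 0)

/-- A valuation on `K[x]` extending the valuation `v` on `K`. -/
def IsValExt (v : K → WithTop Λ) (μ : K[X] → WithTop Λ) : Prop :=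
  (∀ f g : K[X], μ (f * g) = μ f + μ g) ∧
  (∀ f g : K[X], min (μ f) (μ g) ≤ μ (f + g)) ∧
  (∀ f : K[X], μ f = ⊤ ↔ f = 0) ∧
  (∀ c : K, μ (C c) = v c)

/-- A semivaluation on `K[x]` extending `v`: the value `∞` may be attained at
nonzero polynomials. -/
def IsSemivalExt (v : K → WithTop Λ) (μ : K[X] → WithTop Λ) : Prop :=
  (∀ f g : K[X], μ (f * g) = μ f + μ g) ∧
  (∀ f g : K[X], min (μ f) (μ g) ≤ μ (f + g)) ∧
  μ 0 = ⊤ ∧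
  (∀ c : K, μ (C c) = v c)

/-- `f ∼_μ h` : `μ (f - h) > μ f`. -/
def MuEquiv (μ : K[X] → WithTop Λ) (f h : K[X]) : Prop := μ f < μ (f - h)

/-- `h |_μ f` : `f ∼_μ q * h` for some `q`. -/
def MuDvd (μ : K[X] → WithTop Λ) (h f : K[X]) : Prop := ∃ q : K[X], MuEquiv μ f (q * h)

/-- `f` is `μ`-minimal : `f ∤_μ g` for all nonzero `g` of degree `< deg f`. -/
def MuMinimal (μ : K[X] → WithTop Λ) (f : K[X]) : Prop :=
  ∀ g : K[X], g ≠ 0 → g.degree < f.degree → ¬ MuDvd μ f g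

/-- `f` is `μ`-irreducible. -/
def MuIrred (μ : K[X] → WithTop Λ) (f : K[X]) : Prop :=
  f ≠ 0 ∧ ¬ MuDvd μ f 1 ∧ ∀ g h : K[X], MuDvd μ f (g * h) → MuDvd μ f g ∨ MuDvd μ f h

/-- A (MacLane–Vaquié) key polynomial for `μ`: monic, `μ`-minimal and `μ`-irreducible. -/
def IsKeyPol (μ : K[X] → WithTop Λ) (φ : K[X]) : Prop :=
  φ.Monic ∧ MuMinimal μ φ ∧ MuIrred μ φ

end Core

/-! The minimal degree of `φ` forces `μ = μs` on polynomials of degree `< deg φ`: a counterexample,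
made monic, would have smaller degree. Hence `φ` cannot `μ`-divide such a polynomial, which gives
`μ`-minimality. Writing `f = q φ + r` with `deg r < deg φ`, the ultrametric inequality for `μs`
shows that `μ f < μs f` forces `μ f < μ r`, that is `φ |_μ f`; conversely `f ∼_μ q φ` and
`μ (q φ) < μs (q φ)` give `μ f < μs f`. This is (c), and `μ`-irreducibility follows from it since
`μ` and `μs` are multiplicative. Minimality makes `μ` of a `φ`-expansion equal to the minimum of
the values of its terms, so raising the value of `φ` from `μ φ` to `μs φ` gives `μ ≤ μ'`, while
the ultrametric inequality for `μs` gives `μ' ≤ μs`. -/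

section Normalization

variable {K : Type*} [Field K] {Λ : Type*} [AddCommGroup Λ] [LinearOrder Λ]
  {v : K → WithTop Λ} {μ : K[X] → WithTop Λ}

theorem IsValExt.v_one_eq_zero (hμ : IsValExt v μ) : v 1 = 0 := by
  have hidem : μ 1 + μ 1 = μ 1 := by rw [← hμ.1, one_mul]
  rw [← hμ.2.2.2, C_1]
  lift μ 1 to Λ using fun h => one_ne_zero ((hμ.2.2.1 1).1 h) with a
  norm_cast at hidem ⊢
  exact add_eq_right.mp hidem

theorem IsValExt.isSemivalExt (hμ : IsValExt v μ) : IsSemivalExt v μ :=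
  ⟨hμ.1, hμ.2.1, (hμ.2.2.1 0).2 rfl, hμ.2.2.2⟩

theorem IsSemivalExt.exists_addValuation [IsOrderedAddMonoid Λ] (hμ : IsSemivalExt v μ)
    (hv : v 1 = 0) :
    ∃ w : AddValuation K[X] (WithTop Λ), ⇑w = μ :=
  ⟨AddValuation.of μ hμ.2.2.1 (by rw [← C_1, hμ.2.2.2, hv]) hμ.2.1 hμ.1, rfl⟩

end Normalization

theorem Polynomial.sum_range_succ_mul_pow {R : Type*} [CommSemiring R] (φ : R[X])
    (a : ℕ → R[X]) (N : ℕ) :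
    ∑ s ∈ Finset.range (N + 1), a s * φ ^ s = φ * ∑ s ∈ Finset.range N, a (s + 1) * φ ^ s + a 0 := by
  rw [Finset.sum_range_succ', Finset.mul_sum, pow_zero, mul_one]
  congr 1
  exact Finset.sum_congr rfl fun s _ => by ring

theorem Polynomial.Monic.exists_expansion {R : Type*} [CommRing R] [Nontrivial R] {φ : R[X]}
    (hmon : φ.Monic) (hpos : 0 < φ.degree) (f : R[X]) :
    ∃ (N : ℕ) (a : ℕ → R[X]), (∀ s, (a s).degree < φ.degree) ∧
      f = ∑ s ∈ Finset.range N, a s * φ ^ s := by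
  induction hn : f.natDegree using Nat.strong_induction_on generalizing f with
  | _ n ih =>
    by_cases hf : f.degree < φ.degree
    · exact ⟨1, fun _ => f, fun _ => hf, by simp⟩
    have hq : (f /ₘ φ).natDegree < n := by
      rw [natDegree_divByMonic f hmon, ← hn]
      have := natDegree_pos_iff_degree_pos.2 hpos
      have := natDegree_le_natDegree (not_lt.1 hf)
      omega
    obtain ⟨N, b, hb, hqb⟩ := ih _ hq (f /ₘ φ) rfl
    refine ⟨N + 1, fun s => s.casesOn (f %ₘ φ) b, fun s => ?_, ?_⟩
    · cases s
      exacts [degree_modByMonic_lt f hmon, hb _]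
    rw [sum_range_succ_mul_pow, ← hqb, add_comm]
    exact (modByMonic_add_div f φ).symm

/-- `μ'` is the augmented valuation `[μ; φ, γ]`, prescribed on canonical `φ`-expansions. -/
def IsAugmentation {K : Type*} [Field K] {Λ : Type*} [AddCommGroup Λ] [LinearOrder Λ] (μ : K[X] → WithTop Λ) (φ : K[X]) (γ : WithTop Λ)
    (μ' : K[X] → WithTop Λ) : Prop :=
  ∀ (N : ℕ) (a : ℕ → K[X]), (∀ s, (a s).degree < φ.degree) →
    μ' (∑ s ∈ Finset.range N, a s * φ ^ s) = (Finset.range N).inf fun s => μ (a s) + s • γ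

section KeyPolynomial

variable {K : Type*} [Field K] {Λ : Type*} [AddCommGroup Λ] [LinearOrder Λ] [IsOrderedAddMonoid Λ]
  {μ μs : AddValuation K[X] (WithTop Λ)} {φ : K[X]}

theorem MuMinimal.apply_mul_add (hmin : MuMinimal μ φ) {q r : K[X]} (hr : r.degree < φ.degree) :
    μ (φ * q + r) = min (μ φ + μ q) (μ r) := by
  rw [← μ.map_mul]
  by_cases hne : μ (φ * q) = μ r
  swap
  · exact μ.map_add_of_distinct_val hne
  refine le_antisymm ?_ (μ.map_add _ _)
  rw [← hne, min_self]
  by_contra! hgt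
  rcases eq_or_ne r 0 with rfl | hr0
  · simp at hgt
  refine hmin r hr0 hr ⟨-q, ?_⟩
  show μ r < μ (r - -q * φ)
  rwa [show r - -q * φ = φ * q + r by ring, ← hne]

theorem MuMinimal.apply_sum_le (hmin : MuMinimal μ φ) {a : ℕ → K[X]}
    (ha : ∀ s, (a s).degree < φ.degree) {N t : ℕ} (ht : t < N) :
    μ (∑ s ∈ Finset.range N, a s * φ ^ s) ≤ μ (a t) + t • μ φ := by
  induction N generalizing a t with
  | zero => exact absurd ht (Nat.not_lt_zero t)
  | succ N ih =>
    rw [sum_range_succ_mul_pow, hmin.apply_mul_add (ha 0)]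
    cases t with
    | zero => simp
    | succ t =>
      calc _ ≤ μ φ + μ (∑ s ∈ Finset.range N, a (s + 1) * φ ^ s) := min_le_left _ _
        _ ≤ μ φ + (μ (a (t + 1)) + t • μ φ) := by
          gcongr
          exact ih (fun s => ha (s + 1)) (by omega)
        _ = μ (a (t + 1)) + (t + 1) • μ φ := by rw [succ_nsmul]; abel

theorem degree_pos_of_apply_lt (hmon : φ.Monic) (hlt : μ φ < μs φ) : 0 < φ.degree := by
  rw [← natDegree_pos_iff_degree_pos, Nat.pos_iff_ne_zero]
  intro h
  rw [hmon.natDegree_eq_zero.1 h] at hlt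
  simp at hlt

theorem lt_apply_mul_of_le (hμ : ∀ f, μ f = ⊤ → f = 0) (hle : ∀ f, μ f ≤ μs f)
    (hlt : μ φ < μs φ) {q : K[X]} {γ : WithTop Λ} (hγ : γ ≠ ⊤) (h : γ ≤ μ (q * φ)) :
    γ < μs (q * φ) := by
  rcases eq_or_ne q 0 with rfl | hq
  · simpa using hγ.lt_top
  calc γ ≤ μ q + μ φ := by rwa [← μ.map_mul]
    _ < μ q + μs φ := WithTop.add_lt_add_left (fun h => hq (hμ q h)) hlt
    _ ≤ μs q + μs φ := by gcongr; exact hle q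
    _ = μs (q * φ) := (μs.map_mul q φ).symm

theorem lt_of_muDvd (hμ : ∀ f, μ f = ⊤ → f = 0) (hle : ∀ f, μ f ≤ μs f) (hlt : μ φ < μs φ)
    {f : K[X]} (hf : MuDvd μ φ f) : μ f < μs f := by
  obtain ⟨q, hq⟩ := hf
  have hq : μ f < μ (f - q * φ) := hq
  have hqφ : μ (q * φ) = μ f := μ.map_eq_of_lt_sub (by rwa [μ.map_sub_swap])
  have hs : μ f < μs (q * φ) := lt_apply_mul_of_le hμ hle hlt hq.ne_top hqφ.ge
  simpa using μs.map_lt_add (hq.trans_le (hle _)) hs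

theorem apply_eq_of_degree_lt (hμ : ∀ f, μ f = ⊤ → f = 0) (hle : ∀ f, μ f ≤ μs f)
    (hmindeg : ∀ ψ : K[X], ψ.Monic → μ ψ < μs ψ → φ.degree ≤ ψ.degree)
    {a : K[X]} (ha : a.degree < φ.degree) : μs a = μ a := by
  by_contra hne
  rcases eq_or_ne a 0 with rfl | ha0
  · simp at hne
  have hc : μ (C a.leadingCoeff⁻¹) ≠ ⊤ := fun h => by simpa [ha0] using hμ _ h
  refine (hmindeg _ (monic_mul_leadingCoeff_inv ha0) ?_).not_gt
    (by rwa [degree_mul_leadingCoeff_inv a ha0])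
  rw [μ.map_mul, μs.map_mul]
  calc μ a + μ (C a.leadingCoeff⁻¹) < μs a + μ (C a.leadingCoeff⁻¹) :=
        WithTop.add_lt_add_right hc ((hle a).lt_of_ne (Ne.symm hne))
    _ ≤ μs a + μs (C a.leadingCoeff⁻¹) := by gcongr; exact hle _

theorem muDvd_of_lt (hμ : ∀ f, μ f = ⊤ → f = 0) (hle : ∀ f, μ f ≤ μs f) (hlt : μ φ < μs φ)
    (hmon : φ.Monic) (hmindeg : ∀ ψ : K[X], ψ.Monic → μ ψ < μs ψ → φ.degree ≤ ψ.degree)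
    {f : K[X]} (hf : μ f < μs f) : MuDvd μ φ f := by
  set q := f /ₘ φ
  set r := f %ₘ φ
  have hr : f - q * φ = r := by
    rw [sub_eq_iff_eq_add, mul_comm q]
    exact (modByMonic_add_div f φ).symm
  refine ⟨q, show μ f < μ (f - q * φ) from ?_⟩
  rw [hr]
  -- otherwise `μs r = μ r` lies strictly below both `μs f` and `μs (q * φ)`
  by_contra! hrf
  have hrs : μs r = μ r := apply_eq_of_degree_lt hμ hle hmindeg (degree_modByMonic_lt f hmon)
  have hqφ : μ r ≤ μ (q * φ) := by
    rw [← sub_sub_cancel f (q * φ), hr]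
    exact le_trans (le_min hrf le_rfl) (μ.map_sub _ _)
  have hs := lt_apply_mul_of_le hμ hle hlt (hrf.trans_lt hf).ne_top hqφ
  have := (lt_min (hrf.trans_lt hf) hs).trans_le (μs.map_sub f _)
  rw [hr, hrs] at this
  exact lt_irrefl _ this

theorem apply_eq_iff_not_muDvd (hμ : ∀ f, μ f = ⊤ → f = 0) (hle : ∀ f, μ f ≤ μs f)
    (hlt : μ φ < μs φ) (hmon : φ.Monic)
    (hmindeg : ∀ ψ : K[X], ψ.Monic → μ ψ < μs ψ → φ.degree ≤ ψ.degree) (f : K[X]) :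
    μ f = μs f ↔ ¬ MuDvd μ φ f :=
  ⟨fun h hdvd => (lt_of_muDvd hμ hle hlt hdvd).ne h,
    fun h => by_contra fun hne => h (muDvd_of_lt hμ hle hlt hmon hmindeg ((hle f).lt_of_ne hne))⟩

theorem isKeyPol_of_degree_minimal (hμ : ∀ f, μ f = ⊤ → f = 0) (hle : ∀ f, μ f ≤ μs f)
    (hlt : μ φ < μs φ) (hmon : φ.Monic)
    (hmindeg : ∀ ψ : K[X], ψ.Monic → μ ψ < μs ψ → φ.degree ≤ ψ.degree) : IsKeyPol μ φ := by
  have key := apply_eq_iff_not_muDvd hμ hle hlt hmon hmindeg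
  refine ⟨hmon, fun g _ hg hdvd => (lt_of_muDvd hμ hle hlt hdvd).ne'
    (apply_eq_of_degree_lt hμ hle hmindeg hg), hmon.ne_zero, (key 1).1 (by simp), ?_⟩
  intro g h hgh
  by_contra! hnot
  refine (key (g * h)).1 ?_ hgh
  rw [μ.map_mul, μs.map_mul, (key g).2 hnot.1, (key h).2 hnot.2]

theorem IsAugmentation.apply_self {μ' : K[X] → WithTop Λ} {γ : WithTop Λ}
    (h : IsAugmentation μ φ γ μ') (hpos : 0 < φ.degree) : μ' φ = γ := by
  have ha : ∀ s, (if s = 1 then (1 : K[X]) else 0).degree < φ.degree := by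
    intro s
    split_ifs <;> simp [hpos, bot_le.trans_lt hpos]
  simpa [Finset.sum_range_succ, Finset.range_add_one] using h (1 + 1) _ ha

theorem IsAugmentation.le_apply {μ' : K[X] → WithTop Λ} {γ : WithTop Λ}
    (h : IsAugmentation μ φ γ μ') (hmin : MuMinimal μ φ) (hmon : φ.Monic) (hpos : 0 < φ.degree)
    (hγ : μ φ ≤ γ) (f : K[X]) : μ f ≤ μ' f := by
  obtain ⟨N, a, ha, rfl⟩ := hmon.exists_expansion hpos f
  rw [h N a ha]
  exact Finset.le_inf fun t ht =>
    (hmin.apply_sum_le ha (Finset.mem_range.1 ht)).trans (by gcongr)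

theorem IsAugmentation.apply_le {μ' : K[X] → WithTop Λ} (h : IsAugmentation μ φ (μs φ) μ')
    (hmon : φ.Monic) (hpos : 0 < φ.degree) (hle : ∀ f, μ f ≤ μs f) (f : K[X]) :
    μ' f ≤ μs f := by
  obtain ⟨N, a, ha, rfl⟩ := hmon.exists_expansion hpos f
  rw [h N a ha]
  refine μs.map_le_sum fun s hs => ?_
  rw [μs.map_mul, μs.map_pow]
  exact (Finset.inf_le hs).trans (by gcongr; exact hle _)

end KeyPolynomial

theorem statement_6_general {K : Type*} [Field K] {Λ : Type*} [AddCommGroup Λ] [LinearOrder Λ] [IsOrderedAddMonoid Λ]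
    (v : K → WithTop Λ)
    (μ : K[X] → WithTop Λ) (hμ : IsValExt v μ)
    (μs : K[X] → WithTop Λ) (hμs : IsSemivalExt v μs)
    (hle : ∀ f : K[X], μ f ≤ μs f)
    (φ : K[X]) (hmon : φ.Monic) (hlt : μ φ < μs φ)
    (hmindeg : ∀ ψ : K[X], ψ.Monic → μ ψ < μs ψ → φ.degree ≤ ψ.degree)
    (μ' : K[X] → WithTop Λ)
    (hμ' : ∀ (N : ℕ) (a : ℕ → K[X]), (∀ s, (a s).degree < φ.degree) →
        μ' (∑ s ∈ Finset.range N, a s * φ ^ s) =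
          (Finset.range N).inf fun s => μ (a s) + s • μs φ) :
    IsKeyPol μ φ ∧
    (∀ f : K[X], μ f ≤ μ' f) ∧ μ ≠ μ' ∧ (∀ f : K[X], μ' f ≤ μs f) ∧
    (∀ f : K[X], μ f = μs f ↔ ¬ MuDvd μ φ f) := by
  have hv1 : v 1 = 0 := hμ.v_one_eq_zero
  obtain ⟨μ, rfl⟩ := hμ.isSemivalExt.exists_addValuation hv1
  obtain ⟨μs, rfl⟩ := hμs.exists_addValuation hv1
  have hμ0 : ∀ f, μ f = ⊤ → f = 0 := fun f => (hμ.2.2.1 f).1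
  have hμ' : IsAugmentation μ φ (μs φ) μ' := hμ'
  have hpos : 0 < φ.degree := degree_pos_of_apply_lt hmon hlt
  have hkey : IsKeyPol μ φ := isKeyPol_of_degree_minimal hμ0 hle hlt hmon hmindeg
  refine ⟨hkey, hμ'.le_apply hkey.2.1 hmon hpos hlt.le, fun h => ?_, hμ'.apply_le hmon hpos hle,
    apply_eq_iff_not_muDvd hμ0 hle hlt hmon hmindeg⟩
  exact hlt.ne ((congrFun h φ).trans (hμ'.apply_self hpos))

/-- If `μ < μ*` and `φ` is monic of minimal degree with `μ φ < μ* φ`,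
then `φ` is a key polynomial for `μ`, the augmentation `μ' = [μ; φ, μ*(φ)]` satisfies
`μ < μ' ≤ μ*`, and `μ f = μ* f` iff `φ ∤_μ f`. -/
theorem statement_6 {K : Type*} [Field K] {Λ : Type*} [AddCommGroup Λ] [LinearOrder Λ] [IsOrderedAddMonoid Λ]
    (v : K → WithTop Λ) (hv : IsVal v)
    (μ : K[X] → WithTop Λ) (hμ : IsValExt v μ)
    (μs : K[X] → WithTop Λ) (hμs : IsSemivalExt v μs)
    (hle : ∀ f : K[X], μ f ≤ μs f) (hne : μ ≠ μs)
    (φ : K[X]) (hmon : φ.Monic) (hlt : μ φ < μs φ)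
    (hmindeg : ∀ ψ : K[X], ψ.Monic → μ ψ < μs ψ → φ.degree ≤ ψ.degree)
    (μ' : K[X] → WithTop Λ)
    (hμ' : ∀ (N : ℕ) (a : ℕ → K[X]), (∀ s, (a s).degree < φ.degree) →
        μ' (∑ s ∈ Finset.range N, a s * φ ^ s) =
          (Finset.range N).inf fun s => μ (a s) + s • μs φ) :
    IsKeyPol μ φ ∧
    (∀ f : K[X], μ f ≤ μ' f) ∧ μ ≠ μ' ∧ (∀ f : K[X], μ' f ≤ μs f) ∧
    (∀ f : K[X], μ f = μs f ↔ ¬ MuDvd μ φ f) :=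
  statement_6_general v μ hμ μs hμs hle φ hmon hlt hmindeg μ' hμ'
end

section
/- Let (K,v) be a valued field and let μ* be a semivaluation on K[x] extending v, with values in a linearly ordered abelian group Λ (plus ∞). Let η and η' be valuations on K[x] extending v, with values in Λ ∪ {∞}, such that η ≤ μ*, η ≠ μ*, η' ≤ μ*, and η' ≠ μ*. Then η ≤ η' or η' ≤ η; that is, the open interval below μ* in the partially ordered set of Λ-valued valuations on K[x] extending v is totally ordered. -/
open Polynomial

/-!
Let `φ` be a polynomial of least degree with `η φ < μ φ`; after swapping `η` and
`η'` we may assume `η'` also agrees with `μ` in degrees below `deg φ`, and that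
`η φ ≤ η' φ`. Division by `φ` writes `f = φ q + r` with `deg r < deg φ`, and the expansion
suffers no cancellation for `η`: if `η (φ q) = η r = μ r` were finite, then `μ (φ q) > μ r`,
so `η f ≤ μ f = μ r`. Hence `η f = min (η φ + η q) (η r) ≤ η' f` by induction on the degree.
-/

namespace AddValuation

variable {Λ : Type*} [AddCommGroup Λ] [LinearOrder Λ] [IsOrderedAddMonoid Λ]

theorem map_mul_add_of_le {R : Type*} [Ring R] {η μ : AddValuation R (WithTop Λ)}
    (hle : ∀ f, η f ≤ μ f) {φ q r : R} (hφ : η φ < μ φ) (hr : η r = μ r) :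
    η (φ * q + r) = min (η φ + η q) (η r) := by
  rw [← η.map_mul]
  rcases ne_or_eq (η (φ * q)) (η r) with hne | heq
  · exact η.map_add_of_distinct_val hne
  refine le_antisymm ?_ (η.map_add _ _)
  rw [heq, min_self]
  rcases eq_or_ne (η r) ⊤ with htop | hfin
  · simp [htop]
  have hq : η q ≠ ⊤ := by
    rw [← heq, η.map_mul] at hfin
    exact (WithTop.add_ne_top.mp hfin).2
  have hμ : μ r < μ (φ * q) := calc
    μ r = η φ + η q := by rw [← hr, ← heq, η.map_mul]
    _ < μ φ + η q := WithTop.add_lt_add_right hq hφ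
    _ ≤ μ φ + μ q := add_le_add_right (hle q) _
    _ = μ (φ * q) := (μ.map_mul φ q).symm
  calc η (φ * q + r) ≤ μ (φ * q + r) := hle _
    _ = μ r := μ.map_add_eq_of_lt_right hμ
    _ = η r := hr.symm

variable {K : Type*} [Field K]

theorem exists_minimal_defect {η μ : AddValuation K[X] (WithTop Λ)} (hle : ∀ f, η f ≤ μ f)
    (hne : η ≠ μ) : ∃ φ, η φ < μ φ ∧ ∀ g, g.degree < φ.degree → η g = μ g := by
  have hS : {f : K[X] | η f < μ f}.Nonempty := by
    by_contra h
    exact hne (ext fun f => (hle f).antisymm (not_lt.mp fun hf => h ⟨f, hf⟩))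
  obtain ⟨φ, hφ, hmin⟩ := degree_lt_wf.has_min _ hS
  exact ⟨φ, hφ, fun g hg => (hle g).antisymm (not_lt.mp fun hgφ => hmin g hgφ hg)⟩

theorem le_of_minimal_defect {η η' μ : AddValuation K[X] (WithTop Λ)} (hle : ∀ f, η f ≤ μ f)
    {φ : K[X]} (hφ : η φ < μ φ) (hφdeg : 0 < φ.degree)
    (hη : ∀ g, g.degree < φ.degree → η g = μ g) (hη' : ∀ g, g.degree < φ.degree → η' g = μ g)
    (hφφ' : η φ ≤ η' φ) (f : K[X]) : η f ≤ η' f := by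
  induction f using degree_lt_wf.induction with
  | h f ih =>
    rcases lt_or_ge f.degree φ.degree with hlt | hge
    · rw [hη f hlt, hη' f hlt]
    have hφ0 : φ ≠ 0 := ne_zero_of_degree_gt hφdeg
    have hf0 : f ≠ 0 := by
      rintro rfl
      simp [hφ0] at hge
    have hr : (f % φ).degree < φ.degree := degree_mod_lt f hφ0
    rw [← EuclideanDomain.div_add_mod f φ, map_mul_add_of_le hle hφ (hη _ hr)]
    calc min (η φ + η (f / φ)) (η (f % φ))
        ≤ min (η' φ + η' (f / φ)) (η' (f % φ)) :=
          min_le_min (add_le_add hφφ' (ih _ (degree_div_lt hf0 hφdeg))) (by rw [hη _ hr, hη' _ hr])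
      _ ≤ η' (φ * (f / φ) + f % φ) := by rw [← η'.map_mul]; exact η'.map_add _ _

theorem le_total_of_agree_below {η η' μ : AddValuation K[X] (WithTop Λ)} (hle : ∀ f, η f ≤ μ f)
    (hle' : ∀ f, η' f ≤ μ f) (hC : ∀ c, η (C c) = μ (C c)) {φ : K[X]} (hφ : η φ < μ φ)
    (hη : ∀ g, g.degree < φ.degree → η g = μ g) (hη' : ∀ g, g.degree < φ.degree → η' g = μ g) :
    (∀ f, η f ≤ η' f) ∨ (∀ f, η' f ≤ η f) := by
  have hφdeg : 0 < φ.degree := by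
    by_contra! h
    rw [eq_C_of_degree_le_zero h, hC] at hφ
    exact hφ.false
  rcases le_total (η φ) (η' φ) with h | h
  · exact .inl (le_of_minimal_defect hle hφ hφdeg hη hη' h)
  · exact .inr (le_of_minimal_defect hle' (h.trans_lt hφ) hφdeg hη' hη h)

theorem le_total_of_lt {η η' μ : AddValuation K[X] (WithTop Λ)}
    (hle : ∀ f, η f ≤ μ f) (hne : η ≠ μ) (hle' : ∀ f, η' f ≤ μ f) (hne' : η' ≠ μ)
    (hC : ∀ c, η (C c) = μ (C c)) (hC' : ∀ c, η' (C c) = μ (C c)) :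
    (∀ f, η f ≤ η' f) ∨ (∀ f, η' f ≤ η f) := by
  obtain ⟨φ, hφ, hη⟩ := exists_minimal_defect hle hne
  obtain ⟨φ', hφ', hη'⟩ := exists_minimal_defect hle' hne'
  rcases le_total φ.degree φ'.degree with h | h
  · exact le_total_of_agree_below hle hle' hC hφ hη fun g hg => hη' g (hg.trans_le h)
  · exact (le_total_of_agree_below hle' hle hC' hφ' hη' fun g hg => hη g (hg.trans_le h)).symm

end AddValuation

section Extensions

variable {K : Type*} [Field K] {Λ : Type*} [AddCommGroup Λ] [LinearOrder Λ]
  {v : K → WithTop Λ} {μ : K[X] → WithTop Λ}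

theorem IsValExt.map_one (hμ : IsValExt v μ) : μ 1 = 0 := by
  have h := hμ.1 1 1
  rw [one_mul] at h
  lift μ 1 to Λ using (hμ.2.2.1 1).not.mpr one_ne_zero with a
  exact_mod_cast (left_eq_add.mp (by exact_mod_cast h) : a = 0)

variable [IsOrderedAddMonoid Λ]

/-- Mathlib's `AddValuation` allows nonzero elements of value `⊤`, so it models semivaluations. -/
noncomputable def IsSemivalExt.toAddValuation (hμ : IsSemivalExt v μ) (h1 : μ 1 = 0) :
    AddValuation K[X] (WithTop Λ) :=
  AddValuation.of μ hμ.2.2.1 h1 hμ.2.1 hμ.1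

theorem IsSemivalExt.toAddValuation_ne {μ' : K[X] → WithTop Λ} (hμ : IsSemivalExt v μ)
    (hμ' : IsSemivalExt v μ') (h1 : μ 1 = 0) (h1' : μ' 1 = 0) (hne : μ ≠ μ') :
    hμ.toAddValuation h1 ≠ hμ'.toAddValuation h1' :=
  fun h => hne (funext (DFunLike.congr_fun h))

end Extensions

theorem statement_7_general {K : Type*} [Field K] {Λ : Type*} [AddCommGroup Λ] [LinearOrder Λ] [IsOrderedAddMonoid Λ]
    (v : K → WithTop Λ)
    (μs : K[X] → WithTop Λ) (hμs : IsSemivalExt v μs)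
    (η η' : K[X] → WithTop Λ) (hη : IsValExt v η) (hη' : IsValExt v η')
    (h1 : ∀ f : K[X], η f ≤ μs f) (h2 : η ≠ μs)
    (h3 : ∀ f : K[X], η' f ≤ μs f) (h4 : η' ≠ μs) :
    (∀ f : K[X], η f ≤ η' f) ∨ (∀ f : K[X], η' f ≤ η f) := by
  have hμs1 : μs 1 = 0 := by rw [← C_1, hμs.2.2.2, ← hη.2.2.2, C_1, hη.map_one]
  exact AddValuation.le_total_of_lt h1
    (hη.isSemivalExt.toAddValuation_ne hμs hη.map_one hμs1 h2) h3
    (hη'.isSemivalExt.toAddValuation_ne hμs hη'.map_one hμs1 h4)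
    (fun c => (hη.2.2.2 c).trans (hμs.2.2.2 c).symm)
    (fun c => (hη'.2.2.2 c).trans (hμs.2.2.2 c).symm)

/-- The set of valuations lying strictly below a semivaluation `μ*`
is totally ordered. -/
theorem statement_7 {K : Type*} [Field K] {Λ : Type*} [AddCommGroup Λ] [LinearOrder Λ] [IsOrderedAddMonoid Λ]
    (v : K → WithTop Λ) (hv : IsVal v)
    (μs : K[X] → WithTop Λ) (hμs : IsSemivalExt v μs)
    (η η' : K[X] → WithTop Λ) (hη : IsValExt v η) (hη' : IsValExt v η')
    (h1 : ∀ f : K[X], η f ≤ μs f) (h2 : η ≠ μs)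
    (h3 : ∀ f : K[X], η' f ≤ μs f) (h4 : η' ≠ μs) :
    (∀ f : K[X], η f ≤ η' f) ∨ (∀ f : K[X], η' f ≤ η f) :=
  statement_7_general v μs hμs η η' hη hη' h1 h2 h3 h4
end
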